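/- arXiv:2209.03480 — 2 statements merged into one kernel-verified Lean document; each statement's English description precedes it below -/
import Mathlib

section
/- With c := √2/2 and 0 ≤ ε < 1, define the 4×2 matrices X_p = [[1,0],[0,1],[0,0],[0,0]], U_p = [[c,0],[0,c],[c,0],[0,c]], M = U_p · diag(1, ε), and Δ = [[0,0],[0,0],[0,1],[0,0]]. Then the quantity h := −2·Tr(Mᵀ Δ Δᵀ (I₄ − X_p X_pᵀ) M) + ‖(Δ X_pᵀ + X_p Δᵀ) M‖_F² equals −2c² + (1+ε²)c², and hence h < 0. -/
open Matrix

theorem stmt_3 (ε : ℝ) (hε0 : 0 ≤ ε) (hε1 : ε < 1) :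
    let c : ℝ := Real.sqrt 2 / 2
    let Xp : Matrix (Fin 4) (Fin 2) ℝ := !![1, 0; 0, 1; 0, 0; 0, 0]
    let Up : Matrix (Fin 4) (Fin 2) ℝ := !![c, 0; 0, c; c, 0; 0, c]
    let M : Matrix (Fin 4) (Fin 2) ℝ := Up * !![1, 0; 0, ε]
    let Δ : Matrix (Fin 4) (Fin 2) ℝ := !![0, 0; 0, 0; 0, 1; 0, 0]
    let h : ℝ := -2 * Matrix.trace (Mᵀ * Δ * Δᵀ * (1 - Xp * Xpᵀ) * M)
      + Matrix.trace (((Δ * Xpᵀ + Xp * Δᵀ) * M)ᵀ * ((Δ * Xpᵀ + Xp * Δᵀ) * M))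
    h = -2 * c ^ 2 + (1 + ε ^ 2) * c ^ 2 ∧ h < 0 := by
  intro c Xp Up M Δ h
  have hc : c ^ 2 = 1 / 2 := by
    have : Real.sqrt 2 ^ 2 = 2 := Real.sq_sqrt (by norm_num)
    simp only [c, div_pow, this]; norm_num
  have hh : h = -2 * c ^ 2 + (1 + ε ^ 2) * c ^ 2 := by
    simp only [h, M, Δ, Xp, Up, Matrix.trace, Matrix.diag, Matrix.mul_apply,
      Matrix.transpose_apply, Matrix.sub_apply, Matrix.one_apply, Matrix.add_apply,
      Fin.sum_univ_succ, Fin.sum_univ_zero]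
    norm_num [Fin.ext_iff, Matrix.vecHead, Matrix.vecTail, Matrix.cons_val_two, Matrix.cons_val_succ', Matrix.cons_val_zero,
      Matrix.cons_val_one]
    ring
  refine ⟨hh, ?_⟩
  rw [hh, hc]
  nlinarith
end

section
/- Let X, Y ∈ ℝ^{n×k} have orthonormal columns, k ≤ n/2, all principal angles < π/2, and let X_⊥, V₁, V₂ be as in the CS decomposition. Define γ_⊥(t) = X_⊥ V₂ diag(I_{n−2k}, cos(tθ)) − X V₁ [0, sin(tθ)] (an n×(n−k) matrix). Then γ_⊥(t)ᵀγ_⊥(t) = I_{n−k} for all t, and γ(t)ᵀγ_⊥(t) = 0, i.e., span(γ_⊥(t)) = span(γ(t))^⊥. -/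
open Matrix

private lemma key_alg {R : Type*} [CommRing R] {ι κ μ : Type*} [Fintype ι] [Fintype κ]
    [Fintype μ] [DecidableEq μ] [DecidableEq κ]
    (A : Matrix ι μ R) (B : Matrix ι κ R)
    (hAA : Aᵀ * A = 1) (hBB : Bᵀ * B = 1) (hAB : Aᵀ * B = 0)
    (C : Matrix μ μ R) (S : Matrix μ κ R) (D : Matrix κ κ R)
    (h1 : Cᵀ * C + S * Sᵀ = 1) (h2 : Sᵀ * C = D * Sᵀ) (hD : Dᵀ = D) :
    ((A * C - B * Sᵀ)ᵀ * (A * C - B * Sᵀ) = 1) ∧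
      ((B * D + A * S)ᵀ * (A * C - B * Sᵀ) = 0) := by
  have hBA : Bᵀ * A = 0 := by
    have h := congrArg Matrix.transpose hAB
    simpa [Matrix.transpose_mul] using h
  have e1 : (A * C)ᵀ * (A * C) = Cᵀ * C := by
    rw [Matrix.transpose_mul, Matrix.mul_assoc, ← Matrix.mul_assoc Aᵀ, hAA, Matrix.one_mul]
  have e2 : (A * C)ᵀ * (B * Sᵀ) = 0 := by
    rw [Matrix.transpose_mul, Matrix.mul_assoc, ← Matrix.mul_assoc Aᵀ, hAB, Matrix.zero_mul,
      Matrix.mul_zero]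
  have e3 : (B * Sᵀ)ᵀ * (A * C) = 0 := by
    rw [Matrix.transpose_mul, Matrix.mul_assoc, ← Matrix.mul_assoc Bᵀ, hBA, Matrix.zero_mul,
      Matrix.mul_zero]
  have e4 : (B * Sᵀ)ᵀ * (B * Sᵀ) = S * Sᵀ := by
    rw [Matrix.transpose_mul, Matrix.mul_assoc, ← Matrix.mul_assoc Bᵀ, hBB, Matrix.one_mul,
      Matrix.transpose_transpose]
  have e5 : (B * D)ᵀ * (A * C) = 0 := by
    rw [Matrix.transpose_mul, Matrix.mul_assoc, ← Matrix.mul_assoc Bᵀ, hBA, Matrix.zero_mul,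
      Matrix.mul_zero]
  have e6 : (B * D)ᵀ * (B * Sᵀ) = D * Sᵀ := by
    rw [Matrix.transpose_mul, Matrix.mul_assoc, ← Matrix.mul_assoc Bᵀ, hBB, Matrix.one_mul, hD]
  have e7 : (A * S)ᵀ * (A * C) = Sᵀ * C := by
    rw [Matrix.transpose_mul, Matrix.mul_assoc, ← Matrix.mul_assoc Aᵀ, hAA, Matrix.one_mul]
  have e8 : (A * S)ᵀ * (B * Sᵀ) = 0 := by
    rw [Matrix.transpose_mul, Matrix.mul_assoc, ← Matrix.mul_assoc Aᵀ, hAB, Matrix.zero_mul,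
      Matrix.mul_zero]
  constructor
  · rw [Matrix.transpose_sub, Matrix.sub_mul, Matrix.mul_sub, Matrix.mul_sub, e1, e2, e3, e4,
      sub_zero, zero_sub, sub_neg_eq_add, h1]
  · rw [Matrix.transpose_add, Matrix.add_mul, Matrix.mul_sub, Matrix.mul_sub, e5, e6, e7, e8,
      zero_sub, sub_zero, h2]
    abel

theorem stmt_11 (n k : ℕ) (hk : 0 < k) (h2k : 2 * k ≤ n)
    (X Y : Matrix (Fin n) (Fin k) ℝ) (hX : Xᵀ * X = 1) (hY : Yᵀ * Y = 1)
    (Xp : Matrix (Fin n) (Fin (n - k)) ℝ) (hXp : Xpᵀ * Xp = 1) (hperp : Xᵀ * Xp = 0)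
    -- principal angles between span(X) and span(Y):
    (θ : Fin k → ℝ) (hθ0 : ∀ j, 0 ≤ θ j) (hθ1 : ∀ j, θ j < Real.pi / 2)
    (hθmono : ∀ i j : Fin k, i ≤ j → θ i ≤ θ j)
    -- CS decomposition data:
    (V1 : Matrix (Fin k) (Fin k) ℝ) (hV1 : V1ᵀ * V1 = 1 ∧ V1 * V1ᵀ = 1)
    (V2 : Matrix (Fin (n - k)) (Fin (n - k)) ℝ) (hV2 : V2ᵀ * V2 = 1 ∧ V2 * V2ᵀ = 1)
    (U1 : Matrix (Fin k) (Fin k) ℝ) (hU1 : U1ᵀ * U1 = 1 ∧ U1 * U1ᵀ = 1)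
    (hCS : Yᵀ * X = U1 * Matrix.diagonal (fun j => Real.cos (θ j)) * V1ᵀ) :
    ∀ t : ℝ,
      -- S̃ : (n−k)×k, bottom block sin(tθ); its transpose is [0, sin(tθ)] : k×(n−k)
      letI Stilde : Matrix (Fin (n - k)) (Fin k) ℝ :=
        fun i j => if (i : ℕ) = (n - 2 * k) + (j : ℕ) then Real.sin (t * θ j) else 0
      -- C̃ = diag(I_{n−2k}, cos(tθ)) : (n−k)×(n−k)
      letI Ctilde : Matrix (Fin (n - k)) (Fin (n - k)) ℝ :=
        fun i i' => if i = i' then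
          (if (i : ℕ) < n - 2 * k then 1
            else Real.cos (t * θ ⟨(i : ℕ) - (n - 2 * k), by have := i.isLt; omega⟩))
          else 0
      letI γ : Matrix (Fin n) (Fin k) ℝ :=
        X * V1 * Matrix.diagonal (fun j => Real.cos (t * θ j)) + Xp * V2 * Stilde
      letI γp : Matrix (Fin n) (Fin (n - k)) ℝ := Xp * V2 * Ctilde - X * V1 * Stildeᵀ
      γpᵀ * γp = 1 ∧ γᵀ * γp = 0 := by
  intro t
  have hXpX : Xpᵀ * X = 0 := by
    have h := congrArg Matrix.transpose hperp
    simpa [Matrix.transpose_mul] using h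
  set S : Matrix (Fin (n - k)) (Fin k) ℝ :=
    fun i j => if (i : ℕ) = (n - 2 * k) + (j : ℕ) then Real.sin (t * θ j) else 0 with hSdef
  set g : Fin (n - k) → ℝ := fun i =>
    if (i : ℕ) < n - 2 * k then 1
    else Real.cos (t * θ ⟨(i : ℕ) - (n - 2 * k), by have := i.isLt; omega⟩) with hgdef
  have hAA : (Xp * V2)ᵀ * (Xp * V2) = 1 := by
    rw [Matrix.transpose_mul, Matrix.mul_assoc, ← Matrix.mul_assoc Xpᵀ, hXp, Matrix.one_mul,
      hV2.1]
  have hBB : (X * V1)ᵀ * (X * V1) = 1 := by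
    rw [Matrix.transpose_mul, Matrix.mul_assoc, ← Matrix.mul_assoc Xᵀ, hX, Matrix.one_mul, hV1.1]
  have hAB : (Xp * V2)ᵀ * (X * V1) = 0 := by
    rw [Matrix.transpose_mul, Matrix.mul_assoc, ← Matrix.mul_assoc Xpᵀ, hXpX, Matrix.zero_mul,
      Matrix.mul_zero]
  have h1 : (Matrix.diagonal g)ᵀ * Matrix.diagonal g + S * Sᵀ = 1 := by
    rw [Matrix.diagonal_transpose, Matrix.diagonal_mul_diagonal]
    ext i i'
    simp only [Matrix.add_apply, Matrix.diagonal_apply, Matrix.mul_apply, Matrix.one_apply,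
      Matrix.transpose_apply]
    simp only [hSdef]
    by_cases hii : i = i'
    · subst hii
      simp only [if_pos rfl]
      by_cases hlt : (i : ℕ) < n - 2 * k
      · rw [Finset.sum_eq_zero, hgdef]
        · simp [hlt]
        · intro j _
          have : ¬ ((i : ℕ) = (n - 2 * k) + (j : ℕ)) := by omega
          simp [this]
      · have hi : (i : ℕ) - (n - 2 * k) < k := by have := i.isLt; omega
        set j0 : Fin k := ⟨(i : ℕ) - (n - 2 * k), hi⟩ with hj0
        have hgi : g i = Real.cos (t * θ j0) := if_neg hlt
        rw [Finset.sum_eq_single j0]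
        · have hcond : (i : ℕ) = (n - 2 * k) + (j0 : ℕ) := by simp [hj0]; omega
          rw [if_pos hcond, hgi]
          simp only [if_true]
          nlinarith [Real.sin_sq_add_cos_sq (t * θ j0)]
        · intro j _ hj
          have : ¬ ((i : ℕ) = (n - 2 * k) + (j : ℕ)) := by
            intro hc
            apply hj
            apply Fin.ext
            simp [hj0]; omega
          simp [this]
        · intro h; exact absurd (Finset.mem_univ j0) h
    · rw [if_neg hii, if_neg hii, Finset.sum_eq_zero, add_zero]
      intro j _
      by_cases h1 : (i : ℕ) = (n - 2 * k) + (j : ℕ)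
      · have h2 : ¬ ((i' : ℕ) = (n - 2 * k) + (j : ℕ)) := by
          intro hc
          exact hii (Fin.ext (by omega))
        simp [h2]
      · simp [h1]
  have h2 : Sᵀ * Matrix.diagonal g =
      Matrix.diagonal (fun j => Real.cos (t * θ j)) * Sᵀ := by
    ext j i
    rw [Matrix.mul_diagonal, Matrix.diagonal_mul]
    simp only [Matrix.transpose_apply]
    simp only [hSdef]
    by_cases hc : (i : ℕ) = (n - 2 * k) + (j : ℕ)
    · rw [if_pos hc, hgdef]
      have hlt : ¬ ((i : ℕ) < n - 2 * k) := by omega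
      simp only [if_neg hlt]
      have : (⟨(i : ℕ) - (n - 2 * k), by have := i.isLt; omega⟩ : Fin k) = j :=
        Fin.ext (by simp; omega)
      rw [this]; ring
    · simp [hc]
  have hD : (Matrix.diagonal (fun j => Real.cos (t * θ j)))ᵀ =
      Matrix.diagonal (fun j => Real.cos (t * θ j)) := Matrix.diagonal_transpose _
  exact key_alg (Xp * V2) (X * V1) hAA hBB hAB (Matrix.diagonal g) S
    (Matrix.diagonal (fun j => Real.cos (t * θ j))) h1 h2 hD
end
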